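/- Pointwise decay of the weighted Cauchy transform quotient: under the estimates |T̄_{z₀,λ}v(z)| ≤ min( τ₂ |λ|^{−1/2} ‖v‖, τ₃ log(3|λ|)|λ|^{−1}|z−z₀|^{−2}(1+|z−z₀|) ‖v‖ ) for v with ‖v‖_{C¹_{z̄}(D̄)} ≤ N₁, one has for every bounded D and |λ| ≥ 1: |∫_D u(z) T̄_{z₀,λ}v(z)/(z̄−z̄₀) dRe z dIm z| ≤ σ₃(D,n) ‖u‖_{C(D̄)} ‖v‖_{C¹_{z̄}(D̄)} log(3|λ|) |λ|^{−3/4}. -/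

import Mathlib

open MeasureTheory Complex

noncomputable section

/-- `n × n` complex matrices with the entrywise max (sup-sup) norm. -/
abbrev Mat (n : ℕ) := Fin n → Fin n → ℂ

/-- Matrix multiplication. -/
def matMul {n : ℕ} (A B : Mat n) : Mat n := fun i j => ∑ k, A i k * B k j

/-- Matrix transpose. -/
def transp {n : ℕ} (A : Mat n) : Mat n := fun i j => A j i

/-- Identity matrix. -/
def matId (n : ℕ) : Mat n := fun i j => if i = j then 1 else 0

/-- Wirtinger derivative `∂/∂z̄`. -/
def dzbar {E : Type*} [NormedAddCommGroup E] [NormedSpace ℂ E] (f : ℂ → E) (z : ℂ) : E :=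
  (2⁻¹ : ℂ) • (fderiv ℝ f z 1 + Complex.I • fderiv ℝ f z Complex.I)

/-- Wirtinger derivative `∂/∂z`. -/
def dz {E : Type*} [NormedAddCommGroup E] [NormedSpace ℂ E] (f : ℂ → E) (z : ℂ) : E :=
  (2⁻¹ : ℂ) • (fderiv ℝ f z 1 - Complex.I • fderiv ℝ f z Complex.I)

/-- Componentwise Laplacian `Δ = ∂²/∂x₁² + ∂²/∂x₂²` on `ℂ ≅ ℝ²`. -/
def lap {E : Type*} [NormedAddCommGroup E] [NormedSpace ℝ E] (f : ℂ → E) (z : ℂ) : E :=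
  fderiv ℝ (fun w => fderiv ℝ f w 1) z 1 +
    fderiv ℝ (fun w => fderiv ℝ f w Complex.I) z Complex.I

/-- Sup norm over the closure of `D`. -/
def supN {n : ℕ} (D : Set ℂ) (u : ℂ → Mat n) : ℝ := ⨆ z : closure D, ‖u (z : ℂ)‖

/-- `C¹_z̄(D̄)` norm: max of the sup norms of `u` and `∂u/∂z̄`. -/
def spaceNorm {n : ℕ} (D : Set ℂ) (u : ℂ → Mat n) : ℝ := max (supN D u) (supN D (dzbar u))

/-- The oscillatory exponential weight `e^{λ(z−z₀)² − λ̄(z̄−z̄₀)²}`. -/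
def phase (z₀ lam z : ℂ) : ℂ :=
  Complex.exp (lam * (z - z₀) ^ 2 - (starRingEnd ℂ) lam * ((starRingEnd ℂ) (z - z₀)) ^ 2)

/-- The Bukhgeim-type Green function `g_{z₀}(z,ζ,λ)`. -/
def gker (D : Set ℂ) (z₀ : ℂ) (lam : ℂ) (z ζ : ℂ) : ℂ :=
  Complex.exp (lam * (ζ - z₀) ^ 2 - (starRingEnd ℂ) lam * ((starRingEnd ℂ) (ζ - z₀)) ^ 2) /
      (4 * (Real.pi : ℂ) ^ 2) *
    ∫ η in D,
      Complex.exp (-lam * (η - z₀) ^ 2 + (starRingEnd ℂ) lam * ((starRingEnd ℂ) (η - z₀)) ^ 2) /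
        ((z - η) * ((starRingEnd ℂ) η - (starRingEnd ℂ) ζ))

/-- The Bukhgeim Green operator `g_{z₀,λ} u`. -/
def gOp {n : ℕ} (D : Set ℂ) (z₀ lam : ℂ) (u : ℂ → Mat n) (z : ℂ) : Mat n :=
  ∫ ζ in D, gker D z₀ lam z ζ • u ζ

/-- The weighted Cauchy transform `T̄_{z₀,λ}`. -/
def Tbar {n : ℕ} (D : Set ℂ) (z₀ lam : ℂ) (u : ℂ → Mat n) (z : ℂ) : Mat n :=
  (Real.pi : ℂ)⁻¹ •
    ∫ ζ in D,
      (Complex.exp (lam * (ζ - z₀) ^ 2 - (starRingEnd ℂ) lam * ((starRingEnd ℂ) (ζ - z₀)) ^ 2) /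
        ((starRingEnd ℂ) z - (starRingEnd ℂ) ζ)) • u ζ

/-!
Write `r = |z - z₀|`. The integrand is bounded by `n ‖u‖ |T̄v(z)| / r`, and the two bounds on
`T̄v` make this at most `a / r` with `a ≍ |λ|^{-1/2}` and at most `b / r³` with
`b ≍ log(3|λ|) / |λ|` (using `r ≤ diam D`). Polar coordinates give `∫_{r < δ} r⁻¹ = 2πδ` and
`∫_{r ≥ δ} r⁻³ = 2π / δ`, so the integral is at most `2π (a δ + b / δ)`; the choice
`δ = |λ|^{-1/4}` makes both terms `O(log(3|λ|) |λ|^{-3/4})`.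
-/

open Set
open scoped ENNReal Real

theorem lintegral_comp_norm_sub (z₀ : ℂ) {g : ℝ → ℝ≥0∞} (hg : Measurable g) :
    ∫⁻ z : ℂ, g ‖z - z₀‖ = ENNReal.ofReal (2 * π) * ∫⁻ r in Ioi 0, ENNReal.ofReal r * g r := by
  have hpolar : ∫⁻ p in polarCoord.target, ENNReal.ofReal p.1 • g ‖Complex.polarCoord.symm p‖ =
      ∫⁻ p in Ioi 0 ×ˢ Ioo (-π) π, ENNReal.ofReal p.1 * g p.1 := by
    refine setLIntegral_congr_fun polarCoord.open_target.measurableSet fun p hp => ?_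
    rw [Complex.norm_polarCoord_symm, abs_of_pos hp.1, smul_eq_mul]
  rw [lintegral_sub_right_eq_self (fun z => g ‖z‖) z₀, ← Complex.lintegral_comp_polarCoord_symm,
    hpolar, Measure.volume_eq_prod, ← Measure.prod_restrict, lintegral_prod _ (by fun_prop)]
  simp only [lintegral_const, Measure.restrict_apply MeasurableSet.univ, univ_inter,
    Real.volume_Ioo, sub_neg_eq_add, ← two_mul]
  rw [lintegral_mul_const' _ _ ENNReal.ofReal_ne_top, mul_comm]

theorem setLIntegral_comp_norm_sub (z₀ : ℂ) {g : ℝ → ℝ≥0∞} (hg : Measurable g) {s : Set ℝ}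
    (hs : MeasurableSet s) :
    ∫⁻ z in (‖· - z₀‖) ⁻¹' s, g ‖z - z₀‖ =
      ENNReal.ofReal (2 * π) * ∫⁻ r in s ∩ Ioi 0, ENNReal.ofReal r * g r := by
  have hpre : MeasurableSet ((‖· - z₀‖) ⁻¹' s) := hs.preimage (by fun_prop)
  calc ∫⁻ z in (‖· - z₀‖) ⁻¹' s, g ‖z - z₀‖ = ∫⁻ z, s.indicator g ‖z - z₀‖ := by
        rw [← lintegral_indicator hpre]; rfl
    _ = _ := by
      rw [lintegral_comp_norm_sub z₀ (hg.indicator hs), ← setLIntegral_indicator hs]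
      simp only [indicator_mul_right]

theorem lintegral_ball_inv_norm_sub (z₀ : ℂ) (δ : ℝ) :
    ∫⁻ z in Metric.ball z₀ δ, ENNReal.ofReal ‖z - z₀‖⁻¹ = ENNReal.ofReal (2 * π * δ) := by
  have hball : Metric.ball z₀ δ = (‖· - z₀‖) ⁻¹' Iio δ := by ext; simp [dist_eq_norm]
  rw [hball, setLIntegral_comp_norm_sub z₀ (g := fun r => ENNReal.ofReal r⁻¹) (by fun_prop)
      measurableSet_Iio, Iio_inter_Ioi,
    setLIntegral_congr_fun measurableSet_Ioo (g := fun _ => 1) fun r hr => ?_]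
  · rw [setLIntegral_const, Real.volume_Ioo, one_mul, sub_zero,
      ← ENNReal.ofReal_mul (by positivity)]
  · rw [← ENNReal.ofReal_mul hr.1.le, mul_inv_cancel₀ hr.1.ne', ENNReal.ofReal_one]

theorem lintegral_compl_ball_inv_norm_sub_pow_three (z₀ : ℂ) {δ : ℝ} (hδ : 0 < δ) :
    ∫⁻ z in (Metric.ball z₀ δ)ᶜ, ENNReal.ofReal (‖z - z₀‖ ^ 3)⁻¹ =
      ENNReal.ofReal (2 * π / δ) := by
  have hball : (Metric.ball z₀ δ)ᶜ = (‖· - z₀‖) ⁻¹' Ici δ := by ext; simp [dist_eq_norm]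
  rw [hball, setLIntegral_comp_norm_sub z₀ (g := fun r => ENNReal.ofReal (r ^ 3)⁻¹) (by fun_prop)
      measurableSet_Ici, inter_eq_left.2 (Ici_subset_Ioi.2 hδ),
    setLIntegral_congr Ioi_ae_eq_Ici.symm,
    setLIntegral_congr_fun measurableSet_Ioi (g := fun r => ENNReal.ofReal (r ^ (-2 : ℝ)))
      fun r hr => ?_]
  · rw [← ofReal_integral_eq_lintegral_ofReal (integrableOn_Ioi_rpow_of_lt (by norm_num) hδ)
        (ae_restrict_of_forall_mem measurableSet_Ioi fun r hr =>
          Real.rpow_nonneg (hδ.trans hr).le _),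
      integral_Ioi_rpow_of_lt (by norm_num) hδ, ← ENNReal.ofReal_mul (by positivity)]
    norm_num [Real.rpow_neg_one, div_eq_mul_inv]
  · have hr0 : 0 < r := hδ.trans hr
    beta_reduce
    rw [← ENNReal.ofReal_mul hr0.le, Real.rpow_neg hr0.le, Real.rpow_two]
    field_simp

theorem enorm_le_ofReal_mul_of_norm_le {E : Type*} [NormedAddCommGroup E] {x : E} {a t : ℝ}
    (ha : 0 ≤ a) (h : ‖x‖ ≤ a * t) : ‖x‖ₑ ≤ ENNReal.ofReal a * ENNReal.ofReal t := by
  rw [← ENNReal.ofReal_mul ha, ← ofReal_norm]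
  exact ENNReal.ofReal_le_ofReal h

theorem norm_setIntegral_le_of_near_far {E : Type*} [NormedAddCommGroup E] [NormedSpace ℝ E]
    {F : ℂ → E} {D : Set ℂ} {z₀ : ℂ} {a b δ : ℝ} (ha : 0 ≤ a) (hb : 0 ≤ b) (hδ : 0 < δ)
    (hnear : ∀ z ∈ D, z ≠ z₀ → ‖F z‖ ≤ a * ‖z - z₀‖⁻¹)
    (hfar : ∀ z ∈ D, z ≠ z₀ → ‖F z‖ ≤ b * (‖z - z₀‖ ^ 3)⁻¹) :
    ‖∫ z in D, F z‖ ≤ 2 * π * (a * δ + b / δ) := by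
  set B := Metric.ball z₀ δ
  have hsplit : ∫⁻ z in D, ‖F z‖ₑ ≤ (∫⁻ z in D ∩ B, ‖F z‖ₑ) + ∫⁻ z in D \ B, ‖F z‖ₑ := by
    conv_lhs => rw [← inter_union_sdiff D B]
    exact lintegral_union_le _ _ _
  have hnear' : ∫⁻ z in D ∩ B, ‖F z‖ₑ ≤
      ∫⁻ z in B, ENNReal.ofReal a * ENNReal.ofReal ‖z - z₀‖⁻¹ := by
    refine (setLIntegral_mono_ae (by fun_prop) ?_).trans (lintegral_mono_set inter_subset_right)
    filter_upwards [volume.ae_ne z₀] with z hz hzD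
    exact enorm_le_ofReal_mul_of_norm_le ha (hnear z hzD.1 hz)
  have hfar' : ∫⁻ z in D \ B, ‖F z‖ₑ ≤
      ∫⁻ z in Bᶜ, ENNReal.ofReal b * ENNReal.ofReal (‖z - z₀‖ ^ 3)⁻¹ := by
    refine (setLIntegral_mono_ae (by fun_prop) ?_).trans
      (lintegral_mono_set (sdiff_subset_compl D B))
    filter_upwards [volume.ae_ne z₀] with z hz hzD
    exact enorm_le_ofReal_mul_of_norm_le hb (hfar z hzD.1 hz)
  have htotal :=
    (enorm_integral_le_lintegral_enorm _).trans (hsplit.trans (add_le_add hnear' hfar'))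
  rw [lintegral_const_mul' _ _ ENNReal.ofReal_ne_top,
    lintegral_const_mul' _ _ ENNReal.ofReal_ne_top, lintegral_ball_inv_norm_sub,
    lintegral_compl_ball_inv_norm_sub_pow_three z₀ hδ, ← ENNReal.ofReal_mul ha,
    ← ENNReal.ofReal_mul hb, ← ENNReal.ofReal_add (by positivity) (by positivity),
    ← ofReal_norm, ENNReal.ofReal_le_ofReal_iff (by positivity)] at htotal
  exact htotal.trans_eq (by ring)

theorem norm_setIntegral_le_of_norm_le_min {E : Type*} [NormedAddCommGroup E] [NormedSpace ℝ E]
    {F : ℂ → E} {D : Set ℂ} {z₀ : ℂ} {K A B R δ : ℝ} (hK : 0 ≤ K) (hA : 0 ≤ A) (hB : 0 ≤ B)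
    (hR : 0 ≤ R) (hδ : 0 < δ) (hDR : ∀ z ∈ D, ‖z - z₀‖ ≤ R)
    (hF : ∀ z ∈ D, z ≠ z₀ →
      ‖F z‖ ≤ K * min A (B * ((1 + ‖z - z₀‖) / ‖z - z₀‖ ^ 2)) * ‖z - z₀‖⁻¹) :
    ‖∫ z in D, F z‖ ≤ 2 * π * K * (A * δ + B * (1 + R) / δ) := by
  refine (norm_setIntegral_le_of_near_far (z₀ := z₀) (a := K * A) (b := K * (B * (1 + R)))
    (by positivity) (by positivity) hδ (fun z hz hne => ?_) (fun z hz hne => ?_)).trans_eq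
    (by ring)
  · exact (hF z hz hne).trans (by gcongr; exact min_le_left _ _)
  · have hcube :
        (1 + ‖z - z₀‖) / ‖z - z₀‖ ^ 2 * ‖z - z₀‖⁻¹ ≤ (1 + R) * (‖z - z₀‖ ^ 3)⁻¹ := by
      rw [div_eq_mul_inv, mul_assoc, ← mul_inv, ← pow_succ]
      gcongr
      exact hDR z hz
    calc ‖F z‖ ≤ K * (B * ((1 + ‖z - z₀‖) / ‖z - z₀‖ ^ 2)) * ‖z - z₀‖⁻¹ :=
          (hF z hz hne).trans (by gcongr; exact min_le_right _ _)
      _ = K * B * ((1 + ‖z - z₀‖) / ‖z - z₀‖ ^ 2 * ‖z - z₀‖⁻¹) := by ring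
      _ ≤ K * B * ((1 + R) * (‖z - z₀‖ ^ 3)⁻¹) := by gcongr
      _ = K * (B * (1 + R)) * (‖z - z₀‖ ^ 3)⁻¹ := by ring

theorem norm_matMul_le {n : ℕ} (A B : Mat n) : ‖matMul A B‖ ≤ n * ‖A‖ * ‖B‖ := by
  refine pi_norm_le_iff_of_nonneg (by positivity) |>.2 fun i => ?_
  refine pi_norm_le_iff_of_nonneg (by positivity) |>.2 fun j => ?_
  calc ‖matMul A B i j‖ ≤ ∑ k, ‖A i k‖ * ‖B k j‖ :=
        (norm_sum_le _ _).trans_eq (by simp only [norm_mul])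
    _ ≤ ∑ _k : Fin n, ‖A‖ * ‖B‖ := by
        gcongr with k
        · exact (norm_le_pi_norm (A i) k).trans (norm_le_pi_norm A i)
        · exact (norm_le_pi_norm (B k) j).trans (norm_le_pi_norm B k)
    _ = n * ‖A‖ * ‖B‖ := by simp [mul_assoc]

theorem supN_nonneg {n : ℕ} (D : Set ℂ) (u : ℂ → Mat n) : 0 ≤ supN D u :=
  Real.iSup_nonneg fun _ => norm_nonneg _

theorem spaceNorm_nonneg {n : ℕ} (D : Set ℂ) (u : ℂ → Mat n) : 0 ≤ spaceNorm D u :=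
  (supN_nonneg D u).trans (le_max_left _ _)

theorem norm_le_supN {n : ℕ} {D : Set ℂ} (hb : Bornology.IsBounded D) {u : ℂ → Mat n}
    (hu : ContinuousOn u (closure D)) {z : ℂ} (hz : z ∈ closure D) : ‖u z‖ ≤ supN D u := by
  obtain ⟨C, hC⟩ := hb.isCompact_closure.exists_bound_of_continuousOn hu
  exact le_ciSup (f := fun z : closure D => ‖u z‖)
    ⟨C, by rintro _ ⟨w, rfl⟩; exact hC w w.2⟩ ⟨z, hz⟩

theorem norm_conj_sub_inv_smul_matMul_le {n : ℕ} (z z₀ : ℂ) (A B : Mat n) :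
    ‖(((starRingEnd ℂ) z - (starRingEnd ℂ) z₀)⁻¹ : ℂ) • matMul A B‖ ≤
      n * ‖A‖ * ‖B‖ * ‖z - z₀‖⁻¹ := by
  rw [norm_smul, ← map_sub, norm_inv, RCLike.norm_conj, mul_comm]
  gcongr
  exact norm_matMul_le A B

theorem one_le_log_three_mul {x : ℝ} (hx : 1 ≤ x) : 1 ≤ Real.log (3 * x) := by
  rw [Real.le_log_iff_exp_le (by positivity)]
  linarith [Real.exp_one_lt_d9]

theorem inv_sqrt_mul_rpow_neg_quarter {x : ℝ} (hx : 0 < x) :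
    (√x)⁻¹ * x ^ (-(1 / 4) : ℝ) = (x ^ ((3 : ℝ) / 4))⁻¹ := by
  rw [Real.sqrt_eq_rpow, ← Real.rpow_neg hx.le, ← Real.rpow_neg hx.le, ← Real.rpow_add hx]
  norm_num

theorem inv_div_rpow_neg_quarter {x : ℝ} (hx : 0 < x) :
    x⁻¹ / x ^ (-(1 / 4) : ℝ) = (x ^ ((3 : ℝ) / 4))⁻¹ := by
  rw [div_eq_mul_inv, ← Real.rpow_neg hx.le, ← Real.rpow_neg_one, ← Real.rpow_neg hx.le,
    ← Real.rpow_add hx]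
  norm_num

theorem Tbar_quotient_estimate_general (n : ℕ) (D : Set ℂ)
    (hb : Bornology.IsBounded D) (τ₂ τ₃ N₁ : ℝ) (hτ₂ : 0 < τ₂) (hτ₃ : 0 < τ₃) :
    ∃ σ₃ : ℝ, 0 < σ₃ ∧
      ∀ (u v : ℂ → Mat n) (z₀ : ℂ) (lam : ℂ), z₀ ∈ D → 1 ≤ ‖lam‖ →
        ContinuousOn u (closure D) →
        ContinuousOn v (closure D) → ContinuousOn (dzbar v) (closure D) →
        spaceNorm D v ≤ N₁ →
        (∀ z ∈ closure D, z ≠ z₀ →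
          ‖Tbar D z₀ lam v z‖ ≤
            min (τ₂ * (Real.sqrt ‖lam‖)⁻¹ * spaceNorm D v)
              (τ₃ * (Real.log (3 * ‖lam‖) / ‖lam‖) * ((1 + ‖z - z₀‖) / ‖z - z₀‖ ^ 2) *
                spaceNorm D v)) →
        ‖∫ z in D, (((starRingEnd ℂ) z - (starRingEnd ℂ) z₀)⁻¹ : ℂ) •
            matMul (u z) (Tbar D z₀ lam v z)‖ ≤
          σ₃ * supN D u * spaceNorm D v * Real.log (3 * ‖lam‖) / ‖lam‖ ^ ((3 : ℝ) / 4) := by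
  set R := Metric.diam D
  refine ⟨2 * π * (n + 1) * (τ₂ + τ₃ * (1 + R)), by positivity, ?_⟩
  intro u v z₀ lam hz₀ hlam hu _ _ _ hT
  set L := ‖lam‖
  set Λ := Real.log (3 * L)
  have hL : 0 < L := one_pos.trans_le hlam
  have hΛ : 1 ≤ Λ := one_le_log_three_mul hlam
  have hu₀ := supN_nonneg D u
  have hv₀ := spaceNorm_nonneg D v
  calc _ ≤ 2 * π * (n * supN D u) * ((τ₂ * (√L)⁻¹ * spaceNorm D v) * L ^ (-(1 / 4) : ℝ) +
        (τ₃ * (Λ / L) * spaceNorm D v) * (1 + R) / L ^ (-(1 / 4) : ℝ)) := by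
        refine norm_setIntegral_le_of_norm_le_min (by positivity) (by positivity) (by positivity)
          Metric.diam_nonneg (by positivity)
          (fun z hz => by rw [← dist_eq_norm]; exact Metric.dist_le_diam_of_mem hb hz hz₀)
          (fun z hz hne => (norm_conj_sub_inv_smul_matMul_le _ _ _ _).trans ?_)
        gcongr
        · exact norm_le_supN hb hu (subset_closure hz)
        · exact (hT z (subset_closure hz) hne).trans_eq (by rw [mul_right_comm (τ₃ * (Λ / L))])
    _ = 2 * π * n * supN D u * spaceNorm D v * (τ₂ * ((√L)⁻¹ * L ^ (-(1 / 4) : ℝ)) +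
        τ₃ * (1 + R) * Λ * (L⁻¹ / L ^ (-(1 / 4) : ℝ))) := by ring
    _ = 2 * π * n * supN D u * spaceNorm D v * (τ₂ + τ₃ * (1 + R) * Λ) * (L ^ ((3 : ℝ) / 4))⁻¹ := by
        rw [inv_sqrt_mul_rpow_neg_quarter hL, inv_div_rpow_neg_quarter hL]; ring
    _ ≤ 2 * π * (n + 1) * supN D u * spaceNorm D v * (τ₂ * Λ + τ₃ * (1 + R) * Λ) *
        (L ^ ((3 : ℝ) / 4))⁻¹ := by
        gcongr 2 * π * ?_ * _ * _ * (?_ + _) * _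
        · linarith
        · exact le_mul_of_one_le_right hτ₂.le hΛ
    _ = _ := by ring

/-- pointwise decay of the weighted Cauchy transform quotient. -/
theorem Tbar_quotient_estimate (n : ℕ) (D : Set ℂ) (hD : IsOpen D)
    (hb : Bornology.IsBounded D) (τ₂ τ₃ N₁ : ℝ) (hτ₂ : 0 < τ₂) (hτ₃ : 0 < τ₃)
    (hN₁ : 0 < N₁) :
    ∃ σ₃ : ℝ, 0 < σ₃ ∧
      ∀ (u v : ℂ → Mat n) (z₀ : ℂ) (lam : ℂ), z₀ ∈ D → 1 ≤ ‖lam‖ →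
        ContinuousOn u (closure D) →
        ContinuousOn v (closure D) → ContinuousOn (dzbar v) (closure D) →
        spaceNorm D v ≤ N₁ →
        (∀ z ∈ closure D, z ≠ z₀ →
          ‖Tbar D z₀ lam v z‖ ≤
            min (τ₂ * (Real.sqrt ‖lam‖)⁻¹ * spaceNorm D v)
              (τ₃ * (Real.log (3 * ‖lam‖) / ‖lam‖) * ((1 + ‖z - z₀‖) / ‖z - z₀‖ ^ 2) *
                spaceNorm D v)) →
        ‖∫ z in D, (((starRingEnd ℂ) z - (starRingEnd ℂ) z₀)⁻¹ : ℂ) •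
            matMul (u z) (Tbar D z₀ lam v z)‖ ≤
          σ₃ * supN D u * spaceNorm D v * Real.log (3 * ‖lam‖) / ‖lam‖ ^ ((3 : ℝ) / 4) :=
  Tbar_quotient_estimate_general n D hb τ₂ τ₃ N₁ hτ₂ hτ₃
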